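/- Let N, M > 1 be integers and let I be the OOEBP instance consisting of N items of size 1 followed by N(M−1) items of size 1/M. Then OPT(I) = N + ⌈N(M−1)/M⌉. (Consequently, since these items can be packed into N bins when reordering is allowed, the ratio between the ordered and reorderable optimal costs tends to 2 as M grows.) -/

import Mathlib

/-!
Next Fit is optimal here. It opens a bin for each item of size 1 and then fills fresh bins with
`M` items of size `1/M` each. Conversely, in a feasible packing nothing can follow an item of
size 1 in its bin, so the `N` large items occupy `N` distinct bins which receive no small item;
and a bin already holding `M` items of size `1/M` is full, so the small items need at least
`⌈N(M-1)/M⌉` further bins.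
-/

open scoped BigOperators Classical

namespace OOEBP

noncomputable section

/-- Load of bin `b` under packing `p` of instance `s`. -/
def binLoad (s : List ℝ) (p : ℕ → ℕ) (b : ℕ) : ℝ :=
  ∑ j ∈ Finset.range s.length, if p j = b then s.getD j 0 else 0

/-- A packing is feasible if each item is placed into a bin whose current
load (total size of earlier items in the same bin) is strictly below 1. -/
def Feasible (s : List ℝ) (p : ℕ → ℕ) : Prop :=
  ∀ i < s.length,
    (∑ j ∈ Finset.range i, if p j = p i then s.getD j 0 else 0) < 1

/-- The cost of a packing: the number of nonempty bins. -/
def cost (s : List ℝ) (p : ℕ → ℕ) : ℕ :=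
  ((Finset.range s.length).image p).card

/-- Optimal cost of a feasible packing of `s`. -/
def OPT (s : List ℝ) : ℕ :=
  sInf {m | ∃ p, Feasible s p ∧ cost s p = m}

/-- Item `i` is the exceeding item of its bin: the bin's total size is at
least 1 and `i` is the item of maximum index in its bin. -/
def IsExceeding (s : List ℝ) (p : ℕ → ℕ) (i : ℕ) : Prop :=
  i < s.length ∧ 1 ≤ binLoad s p (p i) ∧
    ∀ j, i < j → j < s.length → p j ≠ p i

theorem _root_.List.getD_replicate_append_replicate {α : Type*} (N K : ℕ) (a b d : α) (j : ℕ) :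
    (List.replicate N a ++ List.replicate K b).getD j d =
      if j < N then a else if j < N + K then b else d := by
  simp only [List.getD_eq_getElem?_getD, List.getElem?_append, List.length_replicate,
    List.getElem?_replicate]
  split_ifs <;> first | rfl | omega

theorem _root_.Nat.ceil_natCast_div_natCast_le_iff {K M m : ℕ} (hM : 0 < M) :
    ⌈(K : ℝ) / M⌉₊ ≤ m ↔ K ≤ m * M := by
  rw [Nat.ceil_le, div_le_iff₀ (by exact_mod_cast hM)]
  norm_cast

section Feasible

variable {s : List ℝ} {p : ℕ → ℕ}

theorem Feasible.sum_lt_one (hp : Feasible s p) (hs : ∀ j, 0 ≤ s.getD j 0) {i : ℕ}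
    (hi : i < s.length) {S : Finset ℕ} (hS : S ⊆ Finset.range i) (hbin : ∀ j ∈ S, p j = p i) :
    ∑ j ∈ S, s.getD j 0 < 1 :=
  calc ∑ j ∈ S, s.getD j 0 = ∑ j ∈ S, if p j = p i then s.getD j 0 else 0 :=
        Finset.sum_congr rfl fun j hj => (if_pos (hbin j hj)).symm
    _ ≤ ∑ j ∈ Finset.range i, if p j = p i then s.getD j 0 else 0 :=
        Finset.sum_le_sum_of_subset_of_nonneg hS fun j _ _ => by split_ifs; exacts [hs j, le_rfl]
    _ < 1 := hp i hi

theorem Feasible.ne_of_one_le (hp : Feasible s p) (hs : ∀ j, 0 ≤ s.getD j 0) {i j : ℕ}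
    (hi : 1 ≤ s.getD i 0) (hij : i < j) (hj : j < s.length) : p j ≠ p i := fun hbin =>
  have := hp.sum_lt_one hs hj (S := {i}) (by simpa using hij) (by simpa using hbin.symm)
  by rw [Finset.sum_singleton] at this; linarith

theorem Feasible.card_filter_le (hp : Feasible s p) (hs : ∀ j, 0 ≤ s.getD j 0) {x : ℝ} {M : ℕ}
    (hx : 1 ≤ M * x) {T : Finset ℕ} (hT : ∀ j ∈ T, j < s.length ∧ s.getD j 0 = x) (b : ℕ) :
    (T.filter (p · = b)).card ≤ M := by
  set S := T.filter (p · = b)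
  by_contra! hcard
  have hne : S.Nonempty := Finset.card_pos.1 (by omega)
  obtain ⟨hiT, hib⟩ := Finset.mem_filter.1 (S.max'_mem hne)
  have hsum := hp.sum_lt_one hs (hT _ hiT).1 (S := S.erase (S.max' hne))
    (fun j hj => Finset.mem_range.2 <| lt_of_le_of_ne (S.le_max' j (Finset.mem_of_mem_erase hj))
      (Finset.ne_of_mem_erase hj))
    (fun j hj => by rw [(Finset.mem_filter.1 (Finset.mem_of_mem_erase hj)).2, hib])
  have hsize : ∀ j ∈ S.erase (S.max' hne), s.getD j 0 = x :=
    fun j hj => (hT j (Finset.mem_filter.1 (Finset.mem_of_mem_erase hj)).1).2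
  rw [Finset.sum_congr rfl hsize, Finset.sum_const, nsmul_eq_mul,
    Finset.card_erase_of_mem (S.max'_mem hne)] at hsum
  have hx0 : 0 ≤ x := (hT _ hiT).2 ▸ hs _
  have hM : (M : ℝ) ≤ (S.card - 1 : ℕ) := by exact_mod_cast (by omega : M ≤ S.card - 1)
  nlinarith [mul_le_mul_of_nonneg_right hM hx0]

end Feasible

section TwoSizes

variable (N K M : ℕ)

theorem le_cost_of_feasible (hM : 0 < M) {p : ℕ → ℕ}
    (hp : Feasible (List.replicate N 1 ++ List.replicate K (1 / M : ℝ)) p) :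
    N + ⌈(K : ℝ) / M⌉₊ ≤ cost (List.replicate N 1 ++ List.replicate K (1 / M : ℝ)) p := by
  set s := List.replicate N 1 ++ List.replicate K (1 / M : ℝ)
  have hlen : s.length = N + K := by simp [s]
  have hsize : ∀ j, s.getD j 0 = if j < N then 1 else if j < N + K then (1 / M : ℝ) else 0 :=
    List.getD_replicate_append_replicate N K 1 _ 0
  have hs : ∀ j, 0 ≤ s.getD j 0 := fun j => by rw [hsize]; split_ifs <;> positivity
  have hsep : ∀ i < N, ∀ j, i < j → j < N + K → p j ≠ p i := fun i hi j hij hj =>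
    hp.ne_of_one_le hs (by rw [hsize, if_pos hi]) hij (hlen ▸ hj)
  set A := (Finset.range N).image p
  set B := (Finset.Ico N (N + K)).image p
  have hA : A.card = N := by
    rw [Finset.card_image_of_injOn, Finset.card_range]
    intro i hi j hj hij
    simp only [Finset.coe_range, Set.mem_Iio] at hi hj
    by_contra hne
    rcases lt_or_gt_of_ne hne with h | h
    · exact hsep i hi j h (by omega) hij.symm
    · exact hsep j hj i h (by omega) hij
  have hAB : Disjoint A B := by
    simp only [A, B, Finset.disjoint_left, Finset.mem_image, Finset.mem_range, Finset.mem_Ico]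
    rintro _ ⟨i, hi, rfl⟩ ⟨j, hj, hij⟩
    exact hsep i hi j (by omega) hj.2 hij
  have hB : K ≤ B.card * M := by
    have := Finset.card_le_mul_card_image (Finset.Ico N (N + K)) M fun b _ =>
      hp.card_filter_le hs (x := 1 / M) (mul_one_div_cancel (Nat.cast_ne_zero.2 hM.ne')).ge
        (fun j hj => by
          simp only [Finset.mem_Ico] at hj
          exact ⟨by omega, by rw [hsize, if_neg hj.1.not_gt, if_pos hj.2]⟩) b
    simpa [mul_comm] using this
  have hcost : cost s p = (A ∪ B).card := by
    rw [cost, hlen, ← Finset.image_union, Finset.range_eq_Ico, Finset.range_eq_Ico,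
      Finset.Ico_union_Ico_eq_Ico (by omega) (by omega)]
  rw [hcost, Finset.card_union_of_disjoint hAB, hA]
  exact Nat.add_le_add_left ((Nat.ceil_natCast_div_natCast_le_iff hM).2 hB) N

def nextFitPacking (i : ℕ) : ℕ := if i < N then i else N + (i - N) / M

theorem feasible_nextFitPacking (hM : 0 < M) :
    Feasible (List.replicate N 1 ++ List.replicate K (1 / M : ℝ)) (nextFitPacking N M) := by
  set s := List.replicate N 1 ++ List.replicate K (1 / M : ℝ)
  have hsize : ∀ j, s.getD j 0 = if j < N then 1 else if j < N + K then (1 / M : ℝ) else 0 :=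
    List.getD_replicate_append_replicate N K 1 _ 0
  intro i hi
  simp only [s, List.length_append, List.length_replicate] at hi
  rw [← Finset.sum_filter]
  by_cases hiN : i < N
  · rw [Finset.filter_false_of_mem fun j hj => ?_, Finset.sum_empty]
    · exact one_pos
    simp only [nextFitPacking, if_pos hiN, if_pos ((Finset.mem_range.1 hj).trans hiN)]
    exact (Finset.mem_range.1 hj).ne
  set t := (i - N) / M * M
  have ht : t + (i - N) % M = i - N := Nat.div_add_mod' (i - N) M
  have hbin : ((Finset.range i).filter (nextFitPacking N M · = nextFitPacking N M i)) ⊆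
      Finset.Ico (N + t) i := fun j hj => by
    simp only [Finset.mem_filter, Finset.mem_range, nextFitPacking, if_neg hiN] at hj
    obtain ⟨hji, hq⟩ := hj
    split_ifs at hq with hjN
    · exact absurd (hq ▸ hjN) (Nat.not_lt.2 (Nat.le_add_right _ _))
    · have : (j - N) / M * M ≤ j - N := Nat.div_mul_le_self _ _
      rw [Nat.add_left_cancel hq] at this
      exact Finset.mem_Ico.2 ⟨by omega, hji⟩
  calc _ ≤ ∑ j ∈ Finset.Ico (N + t) i, s.getD j 0 :=
        Finset.sum_le_sum_of_subset_of_nonneg hbin fun j _ _ => by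
          rw [hsize]; split_ifs <;> positivity
    _ = ∑ j ∈ Finset.Ico (N + t) i, (1 / M : ℝ) := Finset.sum_congr rfl fun j hj => by
        rw [Finset.mem_Ico] at hj
        rw [hsize, if_neg (by omega), if_pos (by omega)]
    _ = ((i - N) % M : ℕ) * (1 / M : ℝ) := by
        rw [Finset.sum_const, nsmul_eq_mul, Nat.card_Ico]
        congr 2
        omega
    _ < 1 := by
        rw [mul_one_div, div_lt_one (by exact_mod_cast hM)]
        exact_mod_cast Nat.mod_lt _ hM

theorem cost_nextFitPacking_le (hM : 0 < M) :
    cost (List.replicate N 1 ++ List.replicate K (1 / M : ℝ)) (nextFitPacking N M) ≤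
      N + ⌈(K : ℝ) / M⌉₊ := by
  have hK : K ≤ ⌈(K : ℝ) / M⌉₊ * M := (Nat.ceil_natCast_div_natCast_le_iff hM).1 le_rfl
  calc _ ≤ (Finset.range (N + ⌈(K : ℝ) / M⌉₊)).card := by
        refine Finset.card_le_card fun b hb => ?_
        simp only [Finset.mem_image, Finset.mem_range, List.length_append,
          List.length_replicate] at hb ⊢
        obtain ⟨i, hi, rfl⟩ := hb
        unfold nextFitPacking
        split_ifs
        · omega
        · have := (Nat.div_lt_iff_lt_mul hM).2 (by omega : i - N < ⌈(K : ℝ) / M⌉₊ * M)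
          omega
    _ = _ := Finset.card_range _

theorem OPT_replicate_one_append_replicate_one_div (hM : 0 < M) :
    OPT (List.replicate N 1 ++ List.replicate K (1 / M : ℝ)) = N + ⌈(K : ℝ) / M⌉₊ := by
  have hq := feasible_nextFitPacking N K M hM
  refine le_antisymm (le_trans (Nat.sInf_le ⟨_, hq, rfl⟩) (cost_nextFitPacking_le N K M hM)) ?_
  refine le_csInf ⟨_, _, hq, rfl⟩ ?_
  rintro _ ⟨p, hp, rfl⟩
  exact le_cost_of_feasible N K M hM hp

end TwoSizes

theorem stmt5 (N M : ℕ) (hM : 1 < M) :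
    OPT (List.replicate N (1 : ℝ) ++
         List.replicate (N * (M - 1)) ((1 : ℝ) / M)) =
      N + ⌈((N * (M - 1) : ℕ) : ℝ) / M⌉₊ :=
  OPT_replicate_one_append_replicate_one_div N (N * (M - 1)) M (by omega)

end

end OOEBP
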